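/- If A and B are worms all of whose modalities are ≥ α and GLP_Λ proves A ↔ B, then for any worm C, GLP_Λ proves A⟨α⟩C ↔ B⟨α⟩C. -/

import Mathlib

inductive Formula (L : Type) : Type where
  | bot : Formula L
  | var : Nat → Formula L
  | imp : Formula L → Formula L → Formula L
  | box : L → Formula L → Formula L

namespace Formula

variable {L : Type}

def neg (φ : Formula L) : Formula L := imp φ bot
def top : Formula L := neg bot
def and (φ ψ : Formula L) : Formula L := neg (imp φ ψ.neg)
def or (φ ψ : Formula L) : Formula L := imp φ.neg ψ
def iff (φ ψ : Formula L) : Formula L := (imp φ ψ).and (imp ψ φ)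
def dia (α : L) (φ : Formula L) : Formula L := neg (box α φ.neg)

end Formula

open Formula

/-- Provability in the polymodal provability logic `GLP_Λ` over a linear order. -/
inductive GLP {L : Type} [LinearOrder L] : Formula L → Prop where
  | k1 : ∀ φ ψ : Formula L, GLP (φ.imp (ψ.imp φ))
  | k2 : ∀ φ ψ χ : Formula L, GLP ((φ.imp (ψ.imp χ)).imp ((φ.imp ψ).imp (φ.imp χ)))
  | k3 : ∀ φ ψ : Formula L, GLP ((φ.neg.imp ψ.neg).imp (ψ.imp φ))
  | dist : ∀ (α : L) (φ ψ : Formula L), GLP ((Formula.box α (φ.imp ψ)).imp ((Formula.box α φ).imp (Formula.box α ψ)))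
  | lob : ∀ (α : L) (φ : Formula L), GLP ((Formula.box α ((Formula.box α φ).imp φ)).imp (Formula.box α φ))
  | trans : ∀ (α β : L) (φ : Formula L), α ≤ β → GLP ((Formula.box α φ).imp (Formula.box β (Formula.box α φ)))
  | negintro : ∀ (α β : L) (φ : Formula L), α < β → GLP ((dia α φ).imp (Formula.box β (dia α φ)))
  | mono : ∀ (α β : L) (φ : Formula L), α ≤ β → GLP ((Formula.box α φ).imp (Formula.box β φ))
  | mp : ∀ φ ψ : Formula L, GLP (φ.imp ψ) → GLP φ → GLP ψ
  | nec : ∀ (α : L) (φ : Formula L), GLP φ → GLP (Formula.box α φ)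

/-- The worm (iterated consistency statement) associated to a list of modalities. -/
def worm {L : Type} : List L → Formula L
  | [] => Formula.top
  | α :: w => Formula.dia α (worm w)

/-- `Lt α A B` iff `GLP ⊢ B → ⟨α⟩A`. -/
def Lt {L : Type} [LinearOrder L] (α : L) (A B : List L) : Prop :=
  GLP ((worm B).imp (Formula.dia α (worm A)))

def Le {L : Type} [LinearOrder L] (α : L) (A B : List L) : Prop :=
  Lt α A B ∨ A = B

/-!
Let `φ^θ` be `φ` with every modality relativized to `θ`, i.e. `[β]ψ` replaced by `[β](θ → ψ)`.
Each axiom of `GLP` relativizes to a theorem, so `φ ↦ φ^θ` preserves provability. Take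
`θ := ⟨α⟩C`. A worm `⟨β⟩X` relativizes to `⟨β⟩(θ ∧ X^θ)`, and for `β ≥ α` transitivity gives
`⟨β⟩θ → θ`; by induction, `A⟨α⟩C ↔ θ ∧ A^θ` for `A ∈ 𝕎_α`. Thus `A ↔ B` yields `A^θ ↔ B^θ`
and hence `A⟨α⟩C ↔ B⟨α⟩C`.
-/

namespace Formula

variable {L : Type}

def relativize : Formula L → Formula L → Formula L
  | bot, _ => bot
  | var n, _ => var n
  | imp φ ψ, θ => imp (φ.relativize θ) (ψ.relativize θ)
  | box β φ, θ => box β (θ.imp (φ.relativize θ))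

end Formula

namespace GLP

variable {L : Type} [LinearOrder L] {α β : L} {φ ψ χ θ : Formula L}

theorem mp' (h : GLP (φ.imp ψ)) (hφ : GLP φ) : GLP ψ :=
  mp _ _ h hφ

theorem imp_self (φ : Formula L) : GLP (φ.imp φ) :=
  mp' (mp' (k2 φ (φ.imp φ) φ) (k1 φ (φ.imp φ))) (k1 φ φ)

theorem imp_trans (h₁ : GLP (φ.imp ψ)) (h₂ : GLP (ψ.imp χ)) : GLP (φ.imp χ) :=
  mp' (mp' (k2 φ ψ χ) (mp' (k1 _ φ) h₂)) h₁

theorem top : GLP (Formula.top : Formula L) :=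
  imp_self _

/-- Lets propositional steps be argued from hypotheses, as in natural deduction. -/
def Derives (Γ : List (Formula L)) (φ : Formula L) : Prop :=
  GLP (Γ.foldr .imp φ)

theorem foldr_imp_mp (Γ : List (Formula L)) (φ ψ : Formula L) :
    GLP ((Γ.foldr .imp (φ.imp ψ)).imp ((Γ.foldr .imp φ).imp (Γ.foldr .imp ψ))) := by
  induction Γ with
  | nil => exact imp_self _
  | cons a Γ ih => exact imp_trans (mp' (k2 a _ _) (mp' (k1 _ a) ih)) (k2 a _ _)

theorem imp_foldr_imp (Γ : List (Formula L)) (φ : Formula L) :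
    GLP (φ.imp (Γ.foldr .imp φ)) := by
  induction Γ with
  | nil => exact imp_self φ
  | cons a Γ ih => exact imp_trans ih (k1 _ a)

namespace Derives

variable {Γ : List (Formula L)}

theorem of_glp (h : GLP φ) : Derives Γ φ := by
  induction Γ with
  | nil => exact h
  | cons a Γ ih => exact mp' (k1 _ _) ih

theorem mp (h₁ : Derives Γ (φ.imp ψ)) (h₂ : Derives Γ φ) : Derives Γ ψ :=
  mp' (mp' (foldr_imp_mp Γ φ ψ) h₁) h₂

theorem head : Derives (φ :: Γ) φ :=
  imp_foldr_imp Γ φ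

theorem cons (h : Derives Γ φ) : Derives (ψ :: Γ) φ :=
  mp' (k1 _ _) h

end Derives

open Derives

theorem bot_imp (φ : Formula L) : GLP (Formula.bot.imp φ) :=
  mp' (k3 φ .bot) (mp' (k1 _ φ.neg) (imp_self .bot))

theorem imp_neg_neg (φ : Formula L) : GLP (φ.imp φ.neg.neg) :=
  show Derives [φ, φ.neg] .bot from head.cons.mp head

theorem neg_neg_imp (φ : Formula L) : GLP (φ.neg.neg.imp φ) :=
  mp' (k3 φ φ.neg.neg) (imp_neg_neg φ.neg)

theorem neg_imp_neg (h : GLP (φ.imp ψ)) : GLP (ψ.neg.imp φ.neg) :=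
  show Derives [ψ.neg, φ] .bot from head.mp ((of_glp h).mp head.cons)

theorem of_neg_imp_neg (h : GLP (φ.neg.imp ψ.neg)) : GLP (ψ.imp φ) :=
  mp' (k3 φ ψ) h

theorem and_intro (h₁ : GLP φ) (h₂ : GLP ψ) : GLP (φ.and ψ) :=
  show Derives [φ.imp ψ.neg] .bot from (head.mp (of_glp h₁)).mp (of_glp h₂)

theorem and_left (φ ψ : Formula L) : GLP ((φ.and ψ).imp φ) := by
  refine of_neg_imp_neg (imp_trans ?_ (imp_neg_neg (φ.imp ψ.neg)))
  exact show Derives [φ.neg, φ] ψ.neg from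
    (of_glp (bot_imp ψ.neg)).mp (head.mp head.cons)

theorem and_right (φ ψ : Formula L) : GLP ((φ.and ψ).imp ψ) :=
  of_neg_imp_neg (imp_trans (k1 ψ.neg φ) (imp_neg_neg (φ.imp ψ.neg)))

theorem imp_and (h₁ : GLP (χ.imp φ)) (h₂ : GLP (χ.imp ψ)) : GLP (χ.imp (φ.and ψ)) :=
  show Derives [χ, φ.imp ψ.neg] .bot from
    (head.cons.mp ((of_glp h₁).mp head)).mp ((of_glp h₂).mp head)

theorem iff_intro (h₁ : GLP (φ.imp ψ)) (h₂ : GLP (ψ.imp φ)) : GLP (φ.iff ψ) :=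
  and_intro h₁ h₂

theorem iff_mp (h : GLP (φ.iff ψ)) : GLP (φ.imp ψ) :=
  mp' (and_left _ _) h

theorem iff_mpr (h : GLP (φ.iff ψ)) : GLP (ψ.imp φ) :=
  mp' (and_right _ _) h

theorem iff_symm (h : GLP (φ.iff ψ)) : GLP (ψ.iff φ) :=
  iff_intro (iff_mpr h) (iff_mp h)

theorem iff_trans (h₁ : GLP (φ.iff ψ)) (h₂ : GLP (ψ.iff χ)) : GLP (φ.iff χ) :=
  iff_intro (imp_trans (iff_mp h₁) (iff_mp h₂)) (imp_trans (iff_mpr h₂) (iff_mpr h₁))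

theorem and_congr_right (h : GLP (φ.iff ψ)) : GLP ((θ.and φ).iff (θ.and ψ)) :=
  iff_intro
    (imp_and (and_left _ _) (imp_trans (and_right _ _) (iff_mp h)))
    (imp_and (and_left _ _) (imp_trans (and_right _ _) (iff_mpr h)))

theorem box_mono (h : GLP (φ.imp ψ)) : GLP ((Formula.box β φ).imp (Formula.box β ψ)) :=
  mp' (dist β φ ψ) (nec β _ h)

theorem dia_mono (h : GLP (φ.imp ψ)) : GLP ((dia β φ).imp (dia β ψ)) :=
  neg_imp_neg (box_mono (neg_imp_neg h))

theorem dia_dia_imp_dia (h : α ≤ β) (φ : Formula L) :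
    GLP ((dia β (dia α φ)).imp (dia α φ)) :=
  neg_imp_neg (imp_trans (trans α β φ.neg h) (box_mono (imp_neg_neg _)))

theorem neg_box_imp_neg_iff_dia_and (β : L) (φ ψ : Formula L) :
    GLP ((Formula.box β (φ.imp ψ.neg)).neg.iff (dia β (φ.and ψ))) :=
  iff_intro (neg_imp_neg (box_mono (neg_neg_imp _))) (neg_imp_neg (box_mono (imp_neg_neg _)))

theorem relativize_dia_iff (θ : Formula L) (β : L) (φ : Formula L) :
    GLP (((dia β φ).relativize θ).iff (dia β (θ.and (φ.relativize θ)))) :=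
  neg_box_imp_neg_iff_dia_and β θ (φ.relativize θ)

theorem relativize (θ : Formula L) (h : GLP φ) : GLP (φ.relativize θ) := by
  induction h with
  | k1 => exact k1 _ _
  | k2 => exact k2 _ _ _
  | k3 => exact k3 _ _
  | dist γ => exact imp_trans (box_mono (k2 θ _ _)) (dist γ _ _)
  | lob γ φ =>
    set a := φ.relativize θ
    refine imp_trans (box_mono ?_) (lob γ (θ.imp a))
    set b := Formula.box γ (θ.imp a)
    exact show Derives [θ.imp (b.imp a), b, θ] a from (head.mp head.cons.cons).mp head.cons
  | trans γ δ _ hγδ => exact imp_trans (trans γ δ _ hγδ) (box_mono (k1 _ θ))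
  | negintro γ δ φ hγδ =>
    have hdia := relativize_dia_iff θ γ φ
    exact imp_trans (iff_mp hdia) (imp_trans (negintro γ δ _ hγδ)
      (box_mono (imp_trans (iff_mpr hdia) (k1 _ θ))))
  | mono γ δ _ hγδ => exact mono γ δ _ hγδ
  | mp _ _ _ _ ih₁ ih₂ => exact mp' ih₁ ih₂
  | nec γ _ _ ih => exact nec γ _ (mp' (k1 _ θ) ih)

theorem worm_append_imp_dia (C : List L) :
    ∀ A : List L, (∀ β ∈ A, α ≤ β) → GLP ((worm (A ++ α :: C)).imp (dia α (worm C)))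
  | [], _ => imp_self _
  | β :: A, hA => imp_trans
      (dia_mono (worm_append_imp_dia C A fun γ hγ => hA γ (List.mem_cons_of_mem β hγ)))
      (dia_dia_imp_dia (hA β List.mem_cons_self) (worm C))

theorem worm_append_iff_and_relativize (C : List L) :
    ∀ A : List L, (∀ β ∈ A, α ≤ β) →
      GLP ((worm (A ++ α :: C)).iff
        ((dia α (worm C)).and ((worm A).relativize (dia α (worm C)))))
  | [], _ => iff_intro (imp_and (imp_self _) (mp' (k1 _ _) top)) (and_left _ _)
  | β :: A, hA => by
    have ih := worm_append_iff_and_relativize C A fun γ hγ => hA γ (List.mem_cons_of_mem β hγ)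
    have hdia := relativize_dia_iff (dia α (worm C)) β (worm A)
    refine iff_intro (imp_and (worm_append_imp_dia C (β :: A) hA) ?_) ?_
    · exact imp_trans (dia_mono (iff_mp ih)) (iff_mpr hdia)
    · exact imp_trans (and_right _ _) (imp_trans (iff_mp hdia) (dia_mono (iff_mpr ih)))

end GLP

/-- If `A, B ∈ 𝕎_α` and `GLP ⊢ A ↔ B`, then `GLP ⊢ A⟨α⟩C ↔ B⟨α⟩C`. -/
theorem concat_congr {L : Type} [LinearOrder L] (α : L) (A B C : List L)
    (hA : ∀ β ∈ A, α ≤ β) (hB : ∀ β ∈ B, α ≤ β)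
    (h : GLP ((worm A).iff (worm B))) :
    GLP ((worm (A ++ α :: C)).iff (worm (B ++ α :: C))) :=
  GLP.iff_trans (GLP.worm_append_iff_and_relativize C A hA)
    (GLP.iff_trans (GLP.and_congr_right (GLP.relativize _ h))
      (GLP.iff_symm (GLP.worm_append_iff_and_relativize C B hB)))
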